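/- arXiv:1903.01836 — 2 statements merged into one kernel-verified Lean document; each statement's English description precedes it below -/
import Mathlib

section
/- Let A and B be n×n complex matrices that can be simultaneously conjugated to upper-triangular form, and suppose the commutator [A,B] = AB − BA has nonzero entries only in the first row (i.e. its image is contained in the span of e₁), and suppose e₁ is a cyclic vector for the pair (A,B). Then [A,B] = 0. -/
def IsCyclicVec (n : ℕ) (A B : Matrix (Fin n) (Fin n) ℂ) (v : Fin n → ℂ) : Prop :=
  ∀ S : Submodule ℂ (Fin n → ℂ), v ∈ S → (∀ x ∈ S, A.mulVec x ∈ S) →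
    (∀ x ∈ S, B.mulVec x ∈ S) → S = ⊤

/-! Conjugate so that `A` and `B` are upper triangular; cyclicity of `e₁` is preserved. The last
coordinate is then an eigenfunctional of both, so the hyperplane where it vanishes is invariant, and
it also kills the image of `[A, B]`. A cyclic vector cannot lie in an invariant hyperplane; but if
`[A, B] ≠ 0`, its image is the line through `e₁`, which would put (the conjugate of) `e₁` there. -/

namespace Matrix

theorem exists_mulVec_eq_single_of_ne_zero {ι K : Type*} [Fintype ι] [DecidableEq ι] [Field K]
    {C : Matrix ι ι K} (hC : C ≠ 0) {i₀ : ι} (hrow : ∀ i j, i ≠ i₀ → C i j = 0) :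
    ∃ v, C *ᵥ v = Pi.single i₀ 1 := by
  obtain ⟨j, hj⟩ : ∃ j, C i₀ j ≠ 0 := by
    by_contra! h
    exact hC (ext fun i j => if hi : i = i₀ then hi ▸ h j else hrow i j hi)
  refine ⟨(C i₀ j)⁻¹ • Pi.single j 1, funext fun i => ?_⟩
  by_cases hi : i = i₀
  · subst hi; simp [mulVec_smul, hj]
  · simp [mulVec_smul, hi, hrow i j hi]

variable {ι R : Type*} [Fintype ι] [LinearOrder ι] [CommRing R]

theorem IsUpperTriangular.mulVec_apply_of_isTop {M : Matrix ι ι R} (hM : M.IsUpperTriangular)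
    {l : ι} (hl : IsTop l) (v : ι → R) : (M *ᵥ v) l = M l l * v l := by
  simp only [mulVec, dotProduct]
  refine Finset.sum_eq_single l (fun j _ hj => ?_) (by simp)
  rw [hM (lt_of_le_of_ne (hl j) hj), zero_mul]

theorem IsUpperTriangular.commutator_mulVec_apply_of_isTop {M N : Matrix ι ι R}
    (hM : M.IsUpperTriangular) (hN : N.IsUpperTriangular) {l : ι} (hl : IsTop l) (v : ι → R) :
    ((M * N - N * M) *ᵥ v) l = 0 := by
  simp only [sub_mulVec, ← mulVec_mulVec, Pi.sub_apply, hM.mulVec_apply_of_isTop hl,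
    hN.mulVec_apply_of_isTop hl]
  ring

end Matrix

open Matrix

theorem IsCyclicVec.conj {n : ℕ} {A B : Matrix (Fin n) (Fin n) ℂ} {v : Fin n → ℂ}
    (hv : IsCyclicVec n A B v) {P Q : Matrix (Fin n) (Fin n) ℂ} (hQP : Q * P = 1)
    (hPQ : P * Q = 1) : IsCyclicVec n (P * A * Q) (P * B * Q) (P *ᵥ v) := by
  intro S hvS hA hB
  have conj_mulVec : ∀ (M : Matrix (Fin n) (Fin n) ℂ) x,
      P *ᵥ (M *ᵥ x) = (P * M * Q) *ᵥ (P *ᵥ x) := by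
    intro M x
    simp only [mulVec_mulVec, mul_assoc, hQP, mul_one]
  have hcomap : S.comap (toLin' P) = ⊤ :=
    hv _ hvS (fun x hx => by simpa [conj_mulVec] using hA _ hx)
      (fun x hx => by simpa [conj_mulVec] using hB _ hx)
  refine Submodule.eq_top_iff'.2 fun y => ?_
  simpa [mulVec_mulVec, hPQ] using (Submodule.eq_top_iff'.1 hcomap) (Q *ᵥ y)

theorem IsCyclicVec.apply_ne_zero_of_isTop {n : ℕ} {A B : Matrix (Fin n) (Fin n) ℂ}
    {v : Fin n → ℂ} (hv : IsCyclicVec n A B v) (hA : A.IsUpperTriangular)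
    (hB : B.IsUpperTriangular) {l : Fin n} (hl : IsTop l) : v l ≠ 0 := by
  intro hvl
  have htop := hv (LinearMap.ker (LinearMap.proj l)) hvl
    (fun x hx => by simp_all [hA.mulVec_apply_of_isTop hl])
    (fun x hx => by simp_all [hB.mulVec_apply_of_isTop hl])
  simpa using (Submodule.eq_top_iff'.1 htop) (Pi.single l 1)

/-- if A, B are simultaneously triangularizable, [A,B] has nonzero entries
only in the first row, and e₁ is cyclic for (A,B), then [A,B] = 0. -/
theorem stmt3 (n : ℕ) (A B : Matrix (Fin (n + 1)) (Fin (n + 1)) ℂ)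
    (g : (Matrix (Fin (n + 1)) (Fin (n + 1)) ℂ)ˣ)
    (hgA : ∀ i j : Fin (n + 1), j < i →
      ((g : Matrix (Fin (n + 1)) (Fin (n + 1)) ℂ) * A *
        ((g⁻¹ : (Matrix (Fin (n + 1)) (Fin (n + 1)) ℂ)ˣ) : Matrix (Fin (n + 1)) (Fin (n + 1)) ℂ)) i j = 0)
    (hgB : ∀ i j : Fin (n + 1), j < i →
      ((g : Matrix (Fin (n + 1)) (Fin (n + 1)) ℂ) * B *
        ((g⁻¹ : (Matrix (Fin (n + 1)) (Fin (n + 1)) ℂ)ˣ) : Matrix (Fin (n + 1)) (Fin (n + 1)) ℂ)) i j = 0)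
    (hrow : ∀ i j : Fin (n + 1), i ≠ 0 → (A * B - B * A) i j = 0)
    (hcyc : IsCyclicVec (n + 1) A B (fun x => if x = 0 then 1 else 0)) :
    A * B = B * A := by
  set P : Matrix (Fin (n + 1)) (Fin (n + 1)) ℂ := ↑g
  set Q : Matrix (Fin (n + 1)) (Fin (n + 1)) ℂ := ↑g⁻¹
  have hQP : Q * P = 1 := g.inv_mul
  have hlast : IsTop (Fin.last n) := Fin.le_last
  have he₀ : (Pi.single 0 1 : Fin (n + 1) → ℂ) = fun x => if x = 0 then 1 else 0 :=
    funext fun x => Pi.single_apply 0 1 x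
  have hcyc' := (he₀ ▸ hcyc).conj hQP g.mul_inv
  by_contra hne
  obtain ⟨v, hv⟩ := exists_mulVec_eq_single_of_ne_zero (sub_ne_zero.2 hne) hrow
  have hconj : P * (A * B - B * A) * Q =
      (P * A * Q) * (P * B * Q) - (P * B * Q) * (P * A * Q) := by
    simp only [mul_sub, sub_mul, mul_assoc, ← mul_assoc Q P, hQP, one_mul]
  have hPe₀ : P *ᵥ Pi.single 0 1 = (P * (A * B - B * A) * Q) *ᵥ (P *ᵥ v) := by
    rw [mulVec_mulVec, mul_assoc _ Q P, hQP, mul_one, ← mulVec_mulVec, hv]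
  refine hcyc'.apply_ne_zero_of_isTop hgA hgB hlast ?_
  rw [hPe₀, hconj]
  exact IsUpperTriangular.commutator_mulVec_apply_of_isTop hgA hgB hlast _
end

section
/- Given matrices X, Y ∈ Mat_k(ℂ), i ∈ Mat_{k×2}(ℂ), j ∈ Mat_{2×k}(ℂ), define (k+1)×(k+1) matrices X̂ = [[0, −j₂],[i₁, X]] and Ŷ = [[0, j₁],[i₂, Y]], where i_s is the s-th column of i and j_s the s-th row of j. Then [X,Y] + i j = 0 holds if and only if the commutator [X̂,Ŷ] has nonzero entries only in the first row and the first column. -/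
/-! The lower-right block of `[[0, B], [C, D]] * [[0, B'], [C', D']]` minus the reversed product is
`[D, D'] + C B' - C' B`; for `X̂, Ŷ` the correction term is `i₁ j₁ + i₂ j₂ = i j`. -/

open Matrix

/-- row vector as a 1×k matrix -/
def rowm {k : ℕ} (v : Fin k → ℂ) : Matrix (Fin 1) (Fin k) ℂ := Matrix.of fun _ c => v c

/-- column vector as a k×1 matrix -/
def colm {k : ℕ} (v : Fin k → ℂ) : Matrix (Fin k) (Fin 1) ℂ := Matrix.of fun r _ => v r

/-- X̂ = [[0, −j₂],[i₁, X]] -/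
def hatX {k : ℕ} (X : Matrix (Fin k) (Fin k) ℂ) (i : Matrix (Fin k) (Fin 2) ℂ)
    (j : Matrix (Fin 2) (Fin k) ℂ) : Matrix (Fin 1 ⊕ Fin k) (Fin 1 ⊕ Fin k) ℂ :=
  Matrix.fromBlocks 0 (-(rowm (fun c => j 1 c))) (colm (fun r => i r 0)) X

/-- Ŷ = [[0, j₁],[i₂, Y]] -/
def hatY {k : ℕ} (Y : Matrix (Fin k) (Fin k) ℂ) (i : Matrix (Fin k) (Fin 2) ℂ)
    (j : Matrix (Fin 2) (Fin k) ℂ) : Matrix (Fin 1 ⊕ Fin k) (Fin 1 ⊕ Fin k) ℂ :=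
  Matrix.fromBlocks 0 (rowm (fun c => j 0 c)) (colm (fun r => i r 1)) Y

theorem Matrix.toBlocks₂₂_commutator_fromBlocks_zero {m n α : Type*} [Fintype m] [Fintype n]
    [Ring α] (B B' : Matrix m n α) (C C' : Matrix n m α) (D D' : Matrix n n α) :
    (fromBlocks 0 B C D * fromBlocks 0 B' C' D' - fromBlocks 0 B' C' D' * fromBlocks 0 B C D
      ).toBlocks₂₂ = D * D' - D' * D + (C * B' - C' * B) := by
  rw [fromBlocks_multiply, fromBlocks_multiply, sub_eq_add_neg, fromBlocks_neg, fromBlocks_add,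
    toBlocks_fromBlocks₂₂]
  abel

theorem mul_eq_colm_mul_rowm_add_colm_mul_rowm {k : ℕ} (i : Matrix (Fin k) (Fin 2) ℂ)
    (j : Matrix (Fin 2) (Fin k) ℂ) :
    i * j = colm (fun r => i r 0) * rowm (j 0) + colm (fun r => i r 1) * rowm (j 1) := by
  ext p q
  simp [mul_apply, Fin.sum_univ_two, colm, rowm]

theorem toBlocks₂₂_commutator_hatX_hatY {k : ℕ} (X Y : Matrix (Fin k) (Fin k) ℂ)
    (i : Matrix (Fin k) (Fin 2) ℂ) (j : Matrix (Fin 2) (Fin k) ℂ) :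
    (hatX X i j * hatY Y i j - hatY Y i j * hatX X i j).toBlocks₂₂ = X * Y - Y * X + i * j := by
  rw [hatX, hatY, toBlocks₂₂_commutator_fromBlocks_zero, mul_eq_colm_mul_rowm_add_colm_mul_rowm,
    Matrix.mul_neg, sub_neg_eq_add]

/-- [X,Y] + i j = 0 iff [X̂,Ŷ] has nonzero entries only in the first row
and the first column. -/
theorem stmt7 (k : ℕ) (X Y : Matrix (Fin k) (Fin k) ℂ) (i : Matrix (Fin k) (Fin 2) ℂ)
    (j : Matrix (Fin 2) (Fin k) ℂ) :
    X * Y - Y * X + i * j = 0 ↔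
      ∀ p q : Fin k,
        (hatX X i j * hatY Y i j - hatY Y i j * hatX X i j) (Sum.inr p) (Sum.inr q) = 0 := by
  rw [← toBlocks₂₂_commutator_hatX_hatY, ← Matrix.ext_iff]
  rfl
end
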